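/- Let f : D_R → ℂ, 1 < R < ∞, be analytic with f(z) = Σ_{k=0}^∞ c_k z^k on D_R, and suppose there exist M > 0 and A ∈ (1/R, 1) such that |c_k| ≤ M A^k / k! for all k ≥ 0. If 1 ≤ r < 1/A, then for all z with |z| ≤ r and all n ∈ ℕ with n > r + 2, |L_n*(f)(z) − f(z)| ≤ C_{r,A,M}/n, where C_{r,A,M} = (M(r+2)/r) · Σ_{k=2}^∞ (k+1)(rA)^k < ∞. -/

import Mathlib

/-- The polynomials `T_{n,k}` defined by `T_{n,0}(z) = 1` and
`T_{n,k+1}(z) = (z(1+z)/n) · T_{n,k}′(z) + ((nz+k)/n) · T_{n,k}(z)`. -/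
noncomputable def T (n : ℕ) : ℕ → ℂ → ℂ
  | 0 => fun _ => 1
  | k + 1 => fun z =>
      (z * (1 + z) / (n : ℂ)) * deriv (T n k) z + (((n : ℂ) * z + (k : ℂ)) / (n : ℂ)) * T n k z

/-!
`T n k` is a polynomial with real coefficients, and both it and `T n k - X ^ k` have
nonnegative coefficients; hence `‖T n k z - z ^ k‖ ≤ T n k r - r ^ k` whenever `‖z‖ ≤ r`.
On the positive axis, a polynomial `p` of degree `≤ k` with nonnegative coefficients
satisfies `r p'(r) ≤ k p(r)`, so the recursion gives `T n (k+1) r ≤ (r + k (r+2)/n) T n k r`,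
and induction yields `T n k r - r ^ k ≤ (k+1)! (r+2) r^(k-1) / n` as long as `(r+2)/n ≤ r`.
Multiplying by `‖c k‖ ≤ M A^k / k!` and summing gives the bound; the terms `k = 0, 1` vanish
because `T n 0 = 1` and `T n 1 z = z`.
-/

open Polynomial

section NonnegCoeffs

variable (R : Type*) [Semiring R] [PartialOrder R] [IsOrderedRing R]

def nonnegCoeffs : Subsemiring R[X] where
  carrier := {p | ∀ j, 0 ≤ p.coeff j}
  mul_mem' {p q} hp hq j := by
    rw [coeff_mul]
    exact Finset.sum_nonneg fun x _ => mul_nonneg (hp _) (hq _)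
  one_mem' j := by rw [coeff_one]; split_ifs <;> simp
  add_mem' {p q} hp hq j := by rw [coeff_add]; exact add_nonneg (hp j) (hq j)
  zero_mem' j := by simp

variable {R}

theorem mem_nonnegCoeffs {p : R[X]} : p ∈ nonnegCoeffs R ↔ ∀ j, 0 ≤ p.coeff j := Iff.rfl

theorem C_mem_nonnegCoeffs {a : R} (ha : 0 ≤ a) : C a ∈ nonnegCoeffs R :=
  mem_nonnegCoeffs.2 fun j => by rw [coeff_C]; split_ifs <;> simp [ha]

theorem X_mem_nonnegCoeffs : (X : R[X]) ∈ nonnegCoeffs R :=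
  mem_nonnegCoeffs.2 fun j => by rw [coeff_X]; split_ifs <;> simp

theorem derivative_mem_nonnegCoeffs {p : R[X]} (hp : p ∈ nonnegCoeffs R) :
    derivative p ∈ nonnegCoeffs R :=
  mem_nonnegCoeffs.2 fun j => by
    rw [coeff_derivative]
    exact mul_nonneg (hp _) (add_nonneg (Nat.cast_nonneg _) zero_le_one)

end NonnegCoeffs

theorem norm_aeval_le_eval_of_mem_nonnegCoeffs {A : Type*} [NormedRing A] [NormedAlgebra ℝ A]
    [NormOneClass A] {p : ℝ[X]} (hp : p ∈ nonnegCoeffs ℝ) {z : A} {r : ℝ} (hz : ‖z‖ ≤ r) :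
    ‖aeval z p‖ ≤ p.eval r := by
  rw [aeval_eq_sum_range, eval_eq_sum_range]
  refine (norm_sum_le _ _).trans (Finset.sum_le_sum fun j _ => ?_)
  rw [norm_smul, Real.norm_of_nonneg (hp j)]
  exact mul_le_mul_of_nonneg_left
    ((norm_pow_le z j).trans (pow_le_pow_left₀ (norm_nonneg z) hz j)) (hp j)

theorem mul_eval_derivative_le_of_mem_nonnegCoeffs {p : ℝ[X]} (hp : p ∈ nonnegCoeffs ℝ) {k : ℕ}
    (hk : p.natDegree ≤ k) {x : ℝ} (hx : 0 ≤ x) :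
    x * p.derivative.eval x ≤ k * p.eval x := by
  rw [derivative_eval, eval_eq_sum, sum_def, sum_def, Finset.mul_sum, Finset.mul_sum]
  refine Finset.sum_le_sum fun j hj => ?_
  have hjk : (j : ℝ) ≤ k := by exact_mod_cast (le_natDegree_of_mem_supp j hj).trans hk
  have hcoeff : 0 ≤ p.coeff j * x ^ j := mul_nonneg (hp j) (by positivity)
  calc x * (p.coeff j * j * x ^ (j - 1)) = j * (p.coeff j * x ^ j) := by
        rcases j with _ | j
        · simp
        · rw [Nat.add_sub_cancel, pow_succ]; ring
    _ ≤ k * (p.coeff j * x ^ j) := by gcongr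

theorem natDegree_X_mul_derivative_le {R : Type*} [Semiring R] (p : R[X]) :
    (X * derivative p).natDegree ≤ p.natDegree := by
  rcases eq_or_ne p.natDegree 0 with h | h
  · rw [eq_C_of_natDegree_eq_zero h]; simp
  · have hd := natDegree_derivative_le p
    have hmul := natDegree_mul_le (p := X) (q := derivative p)
    have hX := natDegree_X_le (R := R)
    omega

theorem norm_tsum_le_tsum_nat_add_of_eq_zero {E : Type*} [NormedAddCommGroup E] [CompleteSpace E]
    {a : ℕ → E} {g : ℕ → ℝ} {m : ℕ} (ha : ∀ k < m, a k = 0) (hg : Summable g)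
    (hag : ∀ k, ‖a k‖ ≤ g k) : ‖∑' k, a k‖ ≤ ∑' k, g (k + m) := by
  rw [← (hg.of_norm_bounded hag).sum_add_tsum_nat_add m,
    Finset.sum_eq_zero fun k hk => ha k (Finset.mem_range.1 hk), zero_add]
  exact tsum_of_norm_bounded ((summable_nat_add_iff m).2 hg).hasSum fun k => hag (k + m)

noncomputable def Tpoly (n : ℕ) : ℕ → ℝ[X]
  | 0 => 1
  | k + 1 => C (n : ℝ)⁻¹ *
      (X * (1 + X) * derivative (Tpoly n k) + (C (n : ℝ) * X + C (k : ℝ)) * Tpoly n k)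

theorem T_eq_aeval_Tpoly (n k : ℕ) (z : ℂ) : T n k z = aeval z (Tpoly n k) := by
  induction k generalizing z with
  | zero => simp [T, Tpoly]
  | succ k ih =>
    have hT : T n k = fun w => aeval w (Tpoly n k) := funext ih
    simp only [T, hT, Polynomial.deriv_aeval, Tpoly, map_mul, map_add, aeval_C, aeval_X, map_one,
      map_inv₀, map_natCast]
    ring

theorem T_one {n : ℕ} (hn : n ≠ 0) (z : ℂ) : T n 1 z = z := by
  simp only [T, deriv_const', mul_zero, CharP.cast_eq_zero, add_zero, mul_one, zero_add]
  field_simp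

theorem Tpoly_mem_nonnegCoeffs (n k : ℕ) : Tpoly n k ∈ nonnegCoeffs ℝ := by
  induction k with
  | zero => exact one_mem _
  | succ k ih =>
    have hX := X_mem_nonnegCoeffs (R := ℝ)
    exact mul_mem (C_mem_nonnegCoeffs (by positivity)) <| add_mem
      (mul_mem (mul_mem hX (add_mem (one_mem _) hX)) (derivative_mem_nonnegCoeffs ih))
      (mul_mem (add_mem (mul_mem (C_mem_nonnegCoeffs (by positivity)) hX)
        (C_mem_nonnegCoeffs (by positivity))) ih)

theorem Tpoly_sub_X_pow_mem_nonnegCoeffs {n : ℕ} (hn : n ≠ 0) (k : ℕ) :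
    Tpoly n k - X ^ k ∈ nonnegCoeffs ℝ := by
  induction k with
  | zero => simp [Tpoly, zero_mem]
  | succ k ih =>
    set p := Tpoly n k
    have hC : C (n : ℝ)⁻¹ * C (n : ℝ) = 1 := by
      rw [← C_mul, inv_mul_cancel₀ (by exact_mod_cast hn), C_1]
    have hX := X_mem_nonnegCoeffs (R := ℝ)
    have hp := Tpoly_mem_nonnegCoeffs n k
    have : Tpoly n (k + 1) - X ^ (k + 1) =
        C (n : ℝ)⁻¹ * (X * (1 + X) * derivative p + C (k : ℝ) * p) + X * (p - X ^ k) := by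
      rw [Tpoly]
      linear_combination (X * p) * hC
    rw [this]
    exact add_mem (mul_mem (C_mem_nonnegCoeffs (by positivity)) (add_mem
      (mul_mem (mul_mem hX (add_mem (one_mem _) hX)) (derivative_mem_nonnegCoeffs hp))
      (mul_mem (C_mem_nonnegCoeffs (by positivity)) hp))) (mul_mem hX ih)

theorem natDegree_Tpoly_le (n k : ℕ) : (Tpoly n k).natDegree ≤ k := by
  induction k with
  | zero => simp [Tpoly]
  | succ k ih =>
    have h1X : (1 + X : ℝ[X]).natDegree ≤ 1 := by compute_degree
    have hlin : (C (n : ℝ) * X + C (k : ℝ)).natDegree ≤ 1 := by compute_degree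
    rw [Tpoly, mul_comm X, mul_assoc]
    refine (natDegree_C_mul_le _ _).trans (natDegree_add_le_of_degree_le ?_ ?_)
    · exact (natDegree_mul_le_of_le h1X ((natDegree_X_mul_derivative_le _).trans ih)).trans
        (by omega)
    · exact (natDegree_mul_le_of_le hlin ih).trans (by omega)

theorem eval_Tpoly_succ_le {n : ℕ} (hn : n ≠ 0) (k : ℕ) {r : ℝ} (hr : 0 ≤ r) :
    (Tpoly n (k + 1)).eval r ≤ (r + k * ((r + 2) / n)) * (Tpoly n k).eval r := by
  have hn' : (0 : ℝ) < n := by positivity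
  have hder := mul_le_mul_of_nonneg_left
    (mul_eval_derivative_le_of_mem_nonnegCoeffs (Tpoly_mem_nonnegCoeffs n k)
      (natDegree_Tpoly_le n k) hr)
    (by positivity : (0 : ℝ) ≤ 1 + r)
  rw [Tpoly]
  simp only [eval_mul, eval_add, eval_C, eval_X, eval_one]
  rw [show (r + k * ((r + 2) / n)) * (Tpoly n k).eval r =
      (n : ℝ)⁻¹ * (n * r * (Tpoly n k).eval r + k * (r + 2) * (Tpoly n k).eval r) by
    field_simp]
  exact mul_le_mul_of_nonneg_left (by linarith) (by positivity)

theorem eval_Tpoly_sub_pow_le {n : ℕ} {r : ℝ} (hr : 0 < r) (hrn : r + 2 ≤ n * r) (k : ℕ) :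
    (Tpoly n k).eval r - r ^ k ≤ (k + 1).factorial * ((r + 2) / n) * r ^ k / r := by
  have hn : (0 : ℝ) < n := by nlinarith
  set q := (r + 2) / n
  have hqr : q / r ≤ 1 := by
    rw [div_le_one hr, div_le_iff₀ hn]; linarith
  induction k with
  | zero => simp only [Tpoly, eval_one, pow_zero, sub_self]; positivity
  | succ k ih =>
    set F : ℝ := ((k + 1).factorial : ℝ)
    have hkF : (k : ℝ) ≤ F := by
      simp only [F]
      exact_mod_cast (Nat.le_succ k).trans (Nat.self_le_factorial (k + 1))
    have hstep := eval_Tpoly_succ_le (by exact_mod_cast hn.ne') k hr.le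
    calc (Tpoly n (k + 1)).eval r - r ^ (k + 1)
        ≤ (r + k * q) * ((Tpoly n k).eval r - r ^ k) + k * q * r ^ k := by
          rw [pow_succ]; linarith
      _ ≤ (r + k * q) * (F * q * r ^ k / r) + k * q * r ^ k := by gcongr
      _ = F * q * r ^ k + k * F * q * r ^ k * (q / r) + k * q * r ^ k := by
          field_simp
      _ ≤ F * q * r ^ k + k * F * q * r ^ k * 1 + F * q * r ^ k := by gcongr
      _ = (k + 1 + 1).factorial * q * r ^ (k + 1) / r := by
          rw [Nat.factorial_succ (k + 1)]
          push_cast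
          field_simp
          ring

theorem norm_T_sub_pow_le {n : ℕ} {r : ℝ} (hr : 0 < r) (hrn : r + 2 ≤ n * r) (k : ℕ) {z : ℂ}
    (hz : ‖z‖ ≤ r) :
    ‖T n k z - z ^ k‖ ≤ (k + 1).factorial * ((r + 2) / n) * r ^ k / r := by
  have hn : n ≠ 0 := by rintro rfl; simp at hrn; linarith
  calc ‖T n k z - z ^ k‖ = ‖aeval z (Tpoly n k - X ^ k)‖ := by
        rw [T_eq_aeval_Tpoly, map_sub, aeval_X_pow]
    _ ≤ (Tpoly n k - X ^ k).eval r :=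
        norm_aeval_le_eval_of_mem_nonnegCoeffs (Tpoly_sub_X_pow_mem_nonnegCoeffs hn k) hz
    _ = (Tpoly n k).eval r - r ^ k := by rw [eval_sub, eval_pow, eval_X]
    _ ≤ _ := eval_Tpoly_sub_pow_le hr hrn k

theorem norm_mul_T_sub_pow_le {n k : ℕ} {r M A : ℝ} (hr : 0 < r) (hrn : r + 2 ≤ n * r) {z : ℂ}
    (hz : ‖z‖ ≤ r) {c : ℂ} (hc : ‖c‖ ≤ M * A ^ k / k.factorial) :
    ‖c * (T n k z - z ^ k)‖ ≤ M * (r + 2) / r / n * ((k + 1) * (r * A) ^ k) := by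
  rw [norm_mul]
  refine (mul_le_mul hc (norm_T_sub_pow_le hr hrn k hz) (norm_nonneg _)
    ((norm_nonneg c).trans hc)).trans_eq ?_
  rw [Nat.factorial_succ]
  push_cast
  field_simp
  ring

theorem Lstar_upper_bound_general (R : ℝ) (hR : 1 < R) (f : ℂ → ℂ) (c : ℕ → ℂ)
    (hf : ∀ z : ℂ, ‖z‖ < R → HasSum (fun k => c k * z ^ k) (f z))
    (M A : ℝ) (hA₁ : 1 / R < A)
    (hc : ∀ k : ℕ, ‖c k‖ ≤ M * A ^ k / (k.factorial : ℝ))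
    (r : ℝ) (hr : 1 ≤ r) (hrA : r < 1 / A)
    (n : ℕ) (hn : r + 2 < (n : ℝ)) (z : ℂ) (hz : ‖z‖ ≤ r) :
    ‖(∑' k : ℕ, c k * T n k z) - f z‖
      ≤ (M * (r + 2) / r) * (∑' k : ℕ, (((k : ℝ) + 2) + 1) * (r * A) ^ (k + 2)) / n := by
  have hA : 0 < A := lt_trans (by positivity) hA₁
  have hrn : r + 2 ≤ n * r := by nlinarith
  have hn0 : n ≠ 0 := by rintro rfl; simp at hn; linarith
  have hzR : ‖z‖ < R := hz.trans_lt (hrA.trans ((one_div_lt (by linarith) hA).1 hA₁))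
  have hrA' : ‖r * A‖ < 1 := by
    rw [Real.norm_of_nonneg (by positivity)]; rwa [lt_div_iff₀ hA] at hrA
  have hg : Summable fun k : ℕ => M * (r + 2) / r / n * ((k + 1) * (r * A) ^ k) :=
    ((summable_choose_mul_geometric_of_norm_lt_one 1 hrA').congr fun k => by simp).mul_left _
  have ha := fun k => norm_mul_T_sub_pow_le (by positivity) hrn hz (hc k)
  have hsplit : ∑' k, c k * T n k z - f z = ∑' k, c k * (T n k z - z ^ k) := by
    rw [← (hf z hzR).tsum_eq, sub_eq_iff_eq_add,
      ← (hg.of_norm_bounded ha).tsum_add (hf z hzR).summable]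
    simp_rw [mul_sub, sub_add_cancel]
  have hlow : ∀ k < 2, c k * (T n k z - z ^ k) = 0 := by
    intro k hk
    interval_cases k
    · simp [T]
    · simp [T_one hn0]
  rw [hsplit]
  refine (norm_tsum_le_tsum_nat_add_of_eq_zero hlow hg ha).trans_eq ?_
  rw [tsum_mul_left]
  push_cast
  ring

/-- Under the hypotheses of Theorem 1 (i): for `|z| ≤ r` and `n > r + 2`,
`|L_n*(f)(z) − f(z)| ≤ C_{r,A,M}/n` where
`C_{r,A,M} = (M(r+2)/r) · Σ_{k=2}^∞ (k+1)(rA)^k`. -/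
theorem Lstar_upper_bound (R : ℝ) (hR : 1 < R) (f : ℂ → ℂ) (c : ℕ → ℂ)
    (hf : ∀ z : ℂ, ‖z‖ < R → HasSum (fun k => c k * z ^ k) (f z))
    (M A : ℝ) (hM : 0 < M) (hA₁ : 1 / R < A) (hA₂ : A < 1)
    (hc : ∀ k : ℕ, ‖c k‖ ≤ M * A ^ k / (k.factorial : ℝ))
    (r : ℝ) (hr : 1 ≤ r) (hrA : r < 1 / A)
    (n : ℕ) (hn : r + 2 < (n : ℝ)) (z : ℂ) (hz : ‖z‖ ≤ r) :
    ‖(∑' k : ℕ, c k * T n k z) - f z‖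
      ≤ (M * (r + 2) / r) * (∑' k : ℕ, (((k : ℝ) + 2) + 1) * (r * A) ^ (k + 2)) / n :=
  Lstar_upper_bound_general R hR f c hf M A hA₁ hc r hr hrA n hn z hz
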